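/- In the exact (5,2) nim there is no move from a position x (in nondecreasing order) with balanced reduced matrix to a position y (in nondecreasing order) with balanced reduced matrix. (Combining the cases: neither a move leaving the largest pile largest, nor a move that changes which pile is the leader, can go from *P to *P.) -/

import Mathlib

/-- The `j`-th binary digit of `m`. -/
def digit (m j : ℕ) : ℕ := m / 2 ^ j % 2

/-- The `j`-th column sum of the Bouton matrix of a position. -/
def colSum {n : ℕ} (x : Fin n → ℕ) (j : ℕ) : ℕ := ∑ i, digit (x i) j

/-- A move of classical nim: strictly reduce exactly one pile. -/
def NimMove {n : ℕ} (x y : Fin n → ℕ) : Prop :=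
  ∃ i, y i < x i ∧ ∀ j, j ≠ i → y j = x j

/-- A move of Moore's nim(n, ≤k): strictly reduce at least one and at most `k` piles. -/
def MooreMove (k : ℕ) {n : ℕ} (x y : Fin n → ℕ) : Prop :=
  ∃ S : Finset (Fin n), S.Nonempty ∧ S.card ≤ k ∧ (∀ i ∈ S, y i < x i) ∧ ∀ i ∉ S, y i = x i

/-- A move of exact (n, k) nim: strictly reduce exactly `k` piles. -/
def ExactMove (k : ℕ) {n : ℕ} (x y : Fin n → ℕ) : Prop :=
  ∃ S : Finset (Fin n), S.card = k ∧ (∀ i ∈ S, y i < x i) ∧ ∀ i ∉ S, y i = x i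

/-- N-positions of an impartial game: there is a move to a position all of whose
moves lead to N-positions (i.e. a move to a P-position). -/
inductive NPos {α : Type*} (Move : α → α → Prop) : α → Prop where
  | intro {x y : α} (h : Move x y) (hy : ∀ z, Move y z → NPos Move z) : NPos Move x

/-- P-positions of an impartial game: every move leads to an N-position
(in particular, terminal positions are P-positions). -/
def PPos {α : Type*} (Move : α → α → Prop) (x : α) : Prop :=
  ∀ y, Move x y → NPos Move y

/-!
Zeroing the largest pile of a position does not change the column sums of its reduced
position. After the largest pile of `y` is moved to the place of the largest pile of `x` and
both are zeroed, the exact 2-move becomes a move of Moore's nim(4, ≤ 2): one or two piles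
strictly decrease, the rest are unchanged. At the highest binary digit where some decreased
pile changes, every changed pile loses a 1, so that column sum drops by 1 or 2 and cannot stay
divisible by 3.
-/

open Finset Function

lemma digit_eq_toNat_testBit (m j : ℕ) : digit m j = (m.testBit j).toNat :=
  (Nat.toNat_testBit m j).symm

lemma colSum_comp_perm {n : ℕ} (f : Fin n → ℕ) (σ : Equiv.Perm (Fin n)) :
    colSum (f ∘ σ) = colSum f :=
  funext fun j => Equiv.sum_comp σ fun i => digit (f i) j

lemma colSum_castSucc_eq_update_last {n : ℕ} (f : Fin (n + 1) → ℕ) :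
    colSum (fun i : Fin n => f i.castSucc) = colSum (update f (Fin.last n) 0) := by
  funext j
  simp [colSum, Fin.sum_univ_castSucc, Fin.castSucc_ne_last, digit]

lemma exists_top_differing_bit {n : ℕ} {u v : Fin n → ℕ} (h : u ≠ v) :
    ∃ J, (∃ i, (u i).testBit J ≠ (v i).testBit J) ∧
      ∀ j, J < j → ∀ i, (u i).testBit j = (v i).testBit j := by
  set D := {j | ∃ i, (u i).testBit j ≠ (v i).testBit j}
  have hD : D.Nonempty := by
    obtain ⟨i, hi⟩ := Function.ne_iff.mp h
    exact (Nat.exists_testBit_ne_of_ne hi).imp fun j hj => ⟨i, hj⟩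
  have hbdd : BddAbove D := by
    refine ⟨∑ i, (u i + v i), fun j ⟨i, hi⟩ => ?_⟩
    by_contra! hj
    have hi_le : u i + v i ≤ ∑ i, (u i + v i) :=
      single_le_sum (f := fun i => u i + v i) (by simp) (mem_univ i)
    have hj2 : j < 2 ^ j := Nat.lt_two_pow_self
    exact hi (by rw [Nat.testBit_eq_false_of_lt (by omega), Nat.testBit_eq_false_of_lt (by omega)])
  refine ⟨sSup D, Nat.sSup_mem hD hbdd, fun j hj i => ?_⟩
  by_contra hne
  exact (le_csSup hbdd ⟨i, hne⟩).not_gt hj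

lemma digit_eq_add_one_of_top_differing_bit {a b J : ℕ} (hba : b ≤ a)
    (hne : a.testBit J ≠ b.testBit J) (habove : ∀ j, J < j → a.testBit j = b.testBit j) :
    digit a J = digit b J + 1 := by
  rw [digit_eq_toNat_testBit, digit_eq_toNat_testBit]
  cases ha : a.testBit J <;> cases hb : b.testBit J <;> simp_all
  exact (Nat.lt_of_testBit J ha hb habove).not_ge hba

lemma mooreMove_of_le {k n : ℕ} {u v : Fin n → ℕ} (hle : ∀ i, v i ≤ u i)
    (hne : ∃ i, v i < u i) (hk : #{i | v i < u i} ≤ k) : MooreMove k u v :=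
  ⟨({i | v i < u i} : Finset (Fin n)), hne.imp fun i hi => by simpa using hi, hk,
    fun i hi => by simpa using hi, fun i hi => (hle i).antisymm (by simpa using hi)⟩

theorem MooreMove.not_balanced {k n : ℕ} {u v : Fin n → ℕ} (h : MooreMove k u v)
    (hu : ∀ j, colSum u j % (k + 1) = 0) : ¬ ∀ j, colSum v j % (k + 1) = 0 := by
  obtain ⟨S, ⟨i, hiS⟩, hSk, hlt, heq⟩ := h
  have hle : ∀ i, v i ≤ u i := fun i =>
    if hi : i ∈ S then (hlt i hi).le else (heq i hi).le
  obtain ⟨J, ⟨i₀, hi₀⟩, habove⟩ :=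
    exists_top_differing_bit fun huv => (hlt i hiS).ne (congrFun huv i).symm
  set R : Finset (Fin n) := {i | (u i).testBit J ≠ (v i).testBit J}
  have hRS : R ⊆ S := fun i hi => by
    by_contra hiS
    simp [R, heq i hiS] at hi
  have hdigit : ∀ i, digit (u i) J = digit (v i) J + if i ∈ R then 1 else 0 := by
    intro i
    split_ifs with hi
    · exact digit_eq_add_one_of_top_differing_bit (hle i) (by simpa [R] using hi)
        fun j hj => habove j hj i
    · simp only [R, mem_filter, mem_univ, true_and, not_not] at hi
      simp [digit_eq_toNat_testBit, hi]
  have hsum : colSum u J = colSum v J + #R := by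
    simp [colSum, hdigit, sum_add_distrib]
  intro hv
  have hdvd : k + 1 ∣ #R := (Nat.dvd_add_right (Nat.dvd_of_mod_eq_zero (hv J))).mp
    (hsum ▸ Nat.dvd_of_mod_eq_zero (hu J))
  have hRk := (Nat.le_of_dvd (card_pos.mpr ⟨i₀, by simpa [R] using hi₀⟩) hdvd).trans
    ((card_le_card hRS).trans hSk)
  omega

lemma ExactMove.mooreMove_erase_max {k n : ℕ} (hk : 2 ≤ k) {x y : Fin n → ℕ}
    (hmv : ExactMove k x y) {l t : Fin n} (hl : ∀ s, x s ≤ x l) (ht : ∀ s, y s ≤ y t) :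
    MooreMove k (update x l 0) (update y t 0 ∘ Equiv.swap l t) := by
  obtain ⟨S, hSk, hlt, heq⟩ := hmv
  have hyx : ∀ s, y s ≤ x s := fun s =>
    if hs : s ∈ S then (hlt s hs).le else (heq s hs).le
  set w := update y t 0 ∘ Equiv.swap l t
  have hwl : w l = 0 := by simp [w]
  have hw : ∀ s, s ≠ l → w s = y (Equiv.swap l t s) := by
    intro s hs
    simp [w, Equiv.swap_apply_eq_iff, hs]
  have hwt : t ≠ l → w t = y l := fun htl => by simp [hw t htl]
  have hwS : ∀ s, s ≠ l → s ≠ t → w s = y s := fun s hsl hst => by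
    simp [hw s hsl, Equiv.swap_apply_of_ne_of_ne hsl hst]
  have hwle : ∀ s, s ≠ l → w s ≤ y s := by
    intro s hsl
    rcases eq_or_ne s t with rfl | hst
    · simpa [hwt hsl] using ht l
    · exact (hwS s hsl hst).le
  have hstrict : ∀ s, w s < update x l 0 s → s ≠ l ∧ (s = t ∨ s ∈ S) := by
    intro s hs
    have hsl : s ≠ l := by rintro rfl; simp [hwl] at hs
    refine ⟨hsl, or_iff_not_imp_left.mpr fun hst => ?_⟩
    by_contra hsS
    simp [hwS s hsl hst, heq s hsS, hsl] at hs
  refine mooreMove_of_le (fun s => ?_) ?_ ?_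
  · rcases eq_or_ne s l with rfl | hsl
    · simp [hwl]
    · simpa [hsl] using (hwle s hsl).trans (hyx s)
  · by_cases hS : ∃ s ∈ S, s ≠ l ∧ s ≠ t
    · obtain ⟨s, hsS, hsl, hst⟩ := hS
      exact ⟨s, by simpa [hwS s hsl hst, hsl] using hlt s hsS⟩
    push Not at hS
    have hSlt : S = {l, t} := eq_of_subset_of_card_le
      (fun s hs => by
        by_cases hsl : s = l
        · simp [hsl]
        · simp [hS s hs hsl]) (card_le_two.trans (hSk ▸ hk))
    have htl : t ≠ l := by
      rintro rfl
      simp only [hSlt, mem_singleton, insert_eq_of_mem, card_singleton] at hSk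
      omega
    exact ⟨t, by simpa [htl, hwt htl] using (ht l).trans_lt (hlt t (by simp [hSlt]))⟩
  · by_cases hlS : l ∈ S
    · calc #{s | w s < update x l 0 s} ≤ #(insert t (S.erase l)) := card_le_card fun s hs => by
            obtain ⟨hsl, hs⟩ := hstrict s (by simpa using hs)
            rcases hs with rfl | hsS <;> simp [*]
        _ ≤ #(S.erase l) + 1 := card_insert_le _ _
        _ = k := by rw [card_erase_of_mem hlS]; omega
    · refine le_of_le_of_eq (card_le_card fun s hs => ?_) hSk
      obtain ⟨hsl, rfl | hsS⟩ := hstrict s (by simpa using hs)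
      · have := hl s
        simp only [mem_filter, mem_univ, true_and, update_of_ne hsl, hwt hsl, heq l hlS] at hs
        omega
      · exact hsS

/-- in exact (5,2) nim there is no move from a sorted position with
balanced reduced matrix to a position whose sorted version also has balanced
reduced matrix. -/
theorem exact52_no_P_to_P (x y : Fin 5 → ℕ) (hx : Monotone x)
    (hbx : ∀ j, colSum (fun i : Fin 4 => x i.castSucc) j % 3 = 0)
    (hmv : ExactMove 2 x y) (σ : Equiv.Perm (Fin 5)) (hyσ : Monotone (y ∘ σ)) :
    ¬ ∀ j, colSum (fun i : Fin 4 => (y ∘ σ) i.castSucc) j % 3 = 0 := by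
  set t := σ (Fin.last 4)
  have hmoore := hmv.mooreMove_erase_max le_rfl (fun s => hx (Fin.le_last s))
    (t := t) fun s => by simpa [t] using hyσ (Fin.le_last (σ.symm s))
  have hyσ_update : update (y ∘ σ) (Fin.last 4) 0 = update y t 0 ∘ σ := by
    rw [update_comp_equiv, Equiv.symm_apply_apply]
  rw [colSum_castSucc_eq_update_last] at hbx ⊢
  rw [hyσ_update, colSum_comp_perm, ← colSum_comp_perm _ (Equiv.swap (Fin.last 4) t)]
  exact hmoore.not_balanced hbx
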